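/- Every nonempty open quiver locus Ω°_r ⊆ Hom is a single orbit of the change-of-basis action of GL on Hom; conversely, every GL-orbit on Hom equals Ω°_r for exactly one rank array r, namely the array r_{ij} = rank(φ_{i→j}) of composite ranks of any of its elements. -/

import Mathlib

/-!
Representations with the same composite ranks are isomorphic (the converse is immediate). The
isomorphism `g` is built vertex by vertex, keeping the invariant that `g k` carries every kernel
`ker φ_{k→j}` onto `ker ψ_{k→j}`. At vertex `k + 1` the condition `g (k+1) ∘ φ_k = ψ_k ∘ g k`
prescribes `g (k+1)` on `range φ_k` as a map onto `range ψ_k` which, by the invariant, carries the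
trace of each `ker φ_{k+1→j}` onto that of `ker ψ_{k+1→j}`. These two flags have equal dimensions
(rank–nullity), so the map extends to an automorphism carrying one flag onto the other: one flag
member at a time, by matching complements of the traces.
-/

/-- The space of representations of the equioriented `A_{n+1}` quiver on `V 0, …, V n`:
tuples of linear maps `φ i : V i →ₗ V (i+1)` for `0 ≤ i < n`. -/
abbrev HomSp (n : ℕ) (V : ℕ → Type*) [∀ i, AddCommGroup (V i)] [∀ i, Module ℂ (V i)] : Type _ :=
  ∀ i : Fin n, V (i : ℕ) →ₗ[ℂ] V ((i : ℕ) + 1)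

/-- The composite map `φ_{i → j} : V i → V j` (the identity when `i = j`,
junk when `j < i` or the needed maps are out of range). -/
def chainComp {n : ℕ} {V : ℕ → Type*} [∀ i, AddCommGroup (V i)] [∀ i, Module ℂ (V i)]
    (φ : HomSp n V) (i : ℕ) : (j : ℕ) → (V i →ₗ[ℂ] V j)
  | 0 => if h : i = 0 then (by subst h; exact LinearMap.id) else 0
  | (j + 1) =>
      if h : i = j + 1 then (by subst h; exact LinearMap.id)
      else if hj : j < n then (φ ⟨j, hj⟩).comp (chainComp φ i j) else 0

/-- Two quiver representations lie in the same orbit of the change-of-basis action of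
`GL = GL(V 0) × ⋯ × GL(V n)`, i.e. are isomorphic as quiver representations. -/
def sameOrbit {n : ℕ} {V : ℕ → Type*} [∀ i, AddCommGroup (V i)] [∀ i, Module ℂ (V i)]
    (φ ψ : HomSp n V) : Prop :=
  ∃ g : ∀ k : Fin (n + 1), V (k : ℕ) ≃ₗ[ℂ] V (k : ℕ),
    ∀ i : Fin n, (g i.succ).toLinearMap.comp (φ i) = (ψ i).comp (g i.castSucc).toLinearMap

/-- `φ` lies in the open quiver locus `Ω°_r`: every composite `φ_{i→j}` (`0 ≤ i ≤ j ≤ n`)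
has rank exactly `r i j`. -/
def inOpenLocus {n : ℕ} {V : ℕ → Type*} [∀ i, AddCommGroup (V i)] [∀ i, Module ℂ (V i)]
    (r : ℕ → ℕ → ℕ) (φ : HomSp n V) : Prop :=
  ∀ i j : ℕ, i ≤ j → j ≤ n →
    Module.finrank ℂ (LinearMap.range (chainComp φ i j)) = r i j

universe u

open Module LinearMap

namespace LinearMap

section Ring

variable {R U U' W : Type*} [Ring R] [AddCommGroup U] [Module R U] [AddCommGroup U']
  [Module R U'] [AddCommGroup W] [Module R W]

theorem finrank_map_eq_of_ker_eq {α β : U →ₗ[R] W} (hker : ker α = ker β) (P : Submodule R U) :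
    finrank R (P.map α) = finrank R (P.map β) := by
  have hdom : ker (α.domRestrict P) = ker (β.domRestrict P) := by
    rw [ker_domRestrict, ker_domRestrict, hker]
  rw [← range_domRestrict, ← range_domRestrict]
  exact ((α.domRestrict P).quotKerEquivRange.symm.trans
    ((Submodule.quotEquivOfEq _ _ hdom).trans (β.domRestrict P).quotKerEquivRange)).finrank_eq

theorem exists_linearEquiv_comp_eq_of_surjective {α β : U →ₗ[R] W} (hα : Function.Surjective α)
    (hβ : Function.Surjective β) (hker : ker α = ker β) :
    ∃ g : W ≃ₗ[R] W, g.toLinearMap ∘ₗ α = β := by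
  refine ⟨(α.quotKerEquivOfSurjective hα).symm.trans
    ((Submodule.quotEquivOfEq _ _ hker).trans (β.quotKerEquivOfSurjective hβ)), ?_⟩
  ext u
  simp

theorem comap_coprod_of_range_le (α : U →ₗ[R] W) {γ : U' →ₗ[R] W} {S : Submodule R W}
    (hγ : range γ ≤ S) :
    S.comap (α.coprod γ) = (S.comap α).prod ⊤ := by
  ext ⟨u, c⟩
  have hc : γ c ∈ S := hγ (mem_range_self γ c)
  simp [S.add_mem_iff_left hc]

end Ring

section DivisionRing

variable {K U W : Type*} [DivisionRing K] [AddCommGroup U] [Module K U] [AddCommGroup W]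
  [Module K W] [FiniteDimensional K W]

theorem exists_le_disjoint_range_le_sup (α : U →ₗ[K] W) (S : Submodule K W) :
    ∃ C ≤ S, Disjoint (range α) C ∧ S ≤ range α ⊔ C ∧
      finrank K ((S.comap α).map α) + finrank K C = finrank K S := by
  obtain ⟨C, hdisj, hsup⟩ :=
    IsModularLattice.exists_disjoint_and_sup_eq (inf_le_right : range α ⊓ S ≤ S)
  have hCS : C ≤ S := hsup ▸ le_sup_right
  refine ⟨C, hCS, ?_, hsup ▸ sup_le_sup_right inf_le_left C, ?_⟩
  · rw [disjoint_iff, ← inf_eq_right.mpr hCS, ← inf_assoc, hdisj.eq_bot]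
  · rw [Submodule.map_comap_eq, ← Submodule.finrank_sup_add_finrank_inf_eq, hdisj.eq_bot,
      finrank_bot, add_zero, hsup]

theorem exists_coprod_extension {α β : U →ₗ[K] W} (hker : ker α = ker β)
    {S S' : Submodule K W} (hS : S.comap α = S'.comap β) (hdim : finrank K S = finrank K S') :
    ∃ (C : Submodule K W) (γ : C →ₗ[K] W), C ≤ S ∧ range γ ≤ S' ∧
      S ≤ range (α.coprod C.subtype) ∧ S' ≤ range (β.coprod γ) ∧
      ker (α.coprod C.subtype) = ker (β.coprod γ) := by
  obtain ⟨C, hCS, hCα, hSC, hC⟩ := exists_le_disjoint_range_le_sup α S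
  obtain ⟨C', hCS', hCβ, hSC', hC'⟩ := exists_le_disjoint_range_le_sup β S'
  have hCC' : finrank K C = finrank K C' := by
    have := finrank_map_eq_of_ker_eq hker (S'.comap β)
    rw [← hS] at this hC'
    omega
  let c := LinearEquiv.ofFinrankEq C C' hCC'
  have hγ : range (C'.subtype ∘ₗ c.toLinearMap) = C' := by
    rw [LinearEquiv.range_comp, Submodule.range_subtype]
  refine ⟨C, C'.subtype ∘ₗ c.toLinearMap, hCS, hγ.trans_le hCS', ?_, ?_, ?_⟩
  · rwa [range_coprod, Submodule.range_subtype]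
  · rwa [range_coprod, hγ]
  · rw [ker_coprod_of_disjoint_range _ _ (by rwa [Submodule.range_subtype]),
      ker_coprod_of_disjoint_range _ _ (by rwa [hγ])]
    simp only [ker_comp, Submodule.ker_subtype, Submodule.comap_bot, LinearEquiv.ker, hker]

end DivisionRing

theorem exists_linearEquiv_comp_eq_map_eq {K : Type*} [DivisionRing K] {U W : Type u}
    [AddCommGroup U] [Module K U] [AddCommGroup W] [Module K W] [FiniteDimensional K W] {m : ℕ}
    {α β : U →ₗ[K] W} (hker : ker α = ker β) {S S' : Fin m → Submodule K W} (hS : Monotone S)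
    (hS' : Monotone S') (hcomap : ∀ a, (S a).comap α = (S' a).comap β)
    (hdim : ∀ a, finrank K (S a) = finrank K (S' a)) :
    ∃ g : W ≃ₗ[K] W, g.toLinearMap ∘ₗ α = β ∧ ∀ a, (S a).map g.toLinearMap = S' a := by
  -- Adjoining to `α` a complement of `S 0 ⊓ range α` in `S 0`, and a matching one to `β`,
  -- puts `S 0` and `S' 0` inside the ranges, where `g` is determined (for `m = 0`, use `⊤`).
  induction m generalizing U with
  | zero =>
    obtain ⟨C, γ, -, -, hα, hβ, hkerγ⟩ := exists_coprod_extension hker (S := ⊤) (S' := ⊤)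
      (by simp) rfl
    obtain ⟨g, hg⟩ := exists_linearEquiv_comp_eq_of_surjective
      (range_eq_top.mp (top_le_iff.mp hα)) (range_eq_top.mp (top_le_iff.mp hβ)) hkerγ
    refine ⟨g, ?_, fun a => a.elim0⟩
    simpa [comp_assoc] using congr($hg ∘ₗ inl K U C)
  | succ m ih =>
    obtain ⟨C, γ, hCS, hγS', hα, hβ, hkerγ⟩ := exists_coprod_extension hker (hcomap 0) (hdim 0)
    have hcomap' : ∀ a, (S a).comap (α.coprod C.subtype) = (S' a).comap (β.coprod γ) := by
      intro a
      rw [comap_coprod_of_range_le _ ((C.range_subtype).trans_le (hCS.trans (hS a.zero_le))),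
        comap_coprod_of_range_le _ (hγS'.trans (hS' a.zero_le)), hcomap a]
    obtain ⟨g, hg, hgS⟩ := ih hkerγ (hS.comp Fin.strictMono_succ.monotone)
      (hS'.comp Fin.strictMono_succ.monotone) (fun a => hcomap' a.succ) (fun a => hdim a.succ)
    refine ⟨g, by simpa [comp_assoc] using congr($hg ∘ₗ inl K U C), Fin.cases ?_ hgS⟩
    rw [← Submodule.map_comap_eq_of_le hα, ← Submodule.map_comp, hg, hcomap' 0,
      Submodule.map_comap_eq_of_le hβ]

end LinearMap

section Quiver

variable {n : ℕ} {V : ℕ → Type u} [∀ i, AddCommGroup (V i)] [∀ i, Module ℂ (V i)]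

@[simp]
theorem chainComp_self (φ : HomSp n V) (i : ℕ) : chainComp φ i i = LinearMap.id := by
  cases i <;> simp [chainComp]

theorem chainComp_succ (φ : HomSp n V) {i j : ℕ} (hij : i ≤ j) (hj : j < n) :
    chainComp φ i (j + 1) = φ ⟨j, hj⟩ ∘ₗ chainComp φ i j := by
  rw [chainComp, dif_neg (by omega), dif_pos hj]

theorem chainComp_self_succ (φ : HomSp n V) {i : ℕ} (hi : i < n) :
    chainComp φ i (i + 1) = φ ⟨i, hi⟩ := by
  rw [chainComp_succ φ le_rfl hi, chainComp_self, comp_id]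

theorem chainComp_comp (φ : HomSp n V) {i j k : ℕ} (hij : i ≤ j) (hjk : j ≤ k) (hk : k ≤ n) :
    chainComp φ j k ∘ₗ chainComp φ i j = chainComp φ i k := by
  induction k, hjk using Nat.le_induction with
  | base => rw [chainComp_self, id_comp]
  | succ k hjk ih =>
    rw [chainComp_succ φ hjk (by omega), chainComp_succ φ (hij.trans hjk) (by omega), comp_assoc,
      ih (by omega)]

theorem ker_chainComp_mono (φ : HomSp n V) {i j k : ℕ} (hij : i ≤ j) (hjk : j ≤ k) (hk : k ≤ n) :
    ker (chainComp φ i j) ≤ ker (chainComp φ i k) := by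
  rw [← chainComp_comp φ hij hjk hk]
  exact ker_le_ker_comp _ _

theorem ker_chainComp_eq_comap (φ : HomSp n V) {i j : ℕ} (hij : i < j) (hj : j ≤ n) :
    ker (chainComp φ i j) = (ker (chainComp φ (i + 1) j)).comap (φ ⟨i, by omega⟩) := by
  rw [← chainComp_comp φ (Nat.le_succ i) hij hj, chainComp_self_succ, ker_comp]

theorem sameOrbit_refl (φ : HomSp n V) : sameOrbit φ φ :=
  ⟨fun _ => LinearEquiv.refl ℂ _, fun _ => rfl⟩

theorem sameOrbit_iff {φ ψ : HomSp n V} : sameOrbit φ ψ ↔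
    ∃ g : ∀ t, V t ≃ₗ[ℂ] V t, ∀ i : Fin n, (g (i + 1)).toLinearMap ∘ₗ φ i = ψ i ∘ₗ g i := by
  constructor
  · rintro ⟨g, hg⟩
    refine ⟨fun t => if ht : t < n + 1 then g ⟨t, ht⟩ else LinearEquiv.refl ℂ _, fun i => ?_⟩
    dsimp only
    rw [dif_pos (by omega), dif_pos (by omega)]
    exact hg i
  · rintro ⟨g, hg⟩
    exact ⟨fun t => g t, hg⟩

theorem chainComp_intertwine {φ ψ : HomSp n V} {g : ∀ t, V t ≃ₗ[ℂ] V t}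
    (hg : ∀ i : Fin n, (g (i + 1)).toLinearMap ∘ₗ φ i = ψ i ∘ₗ g i) {i j : ℕ} (hij : i ≤ j)
    (hj : j ≤ n) : (g j).toLinearMap ∘ₗ chainComp φ i j = chainComp ψ i j ∘ₗ g i := by
  induction j, hij using Nat.le_induction with
  | base => simp
  | succ j hij ih =>
    rw [chainComp_succ φ hij (by omega), chainComp_succ ψ hij (by omega), ← comp_assoc,
      hg ⟨j, by omega⟩, comp_assoc, ih (by omega), comp_assoc]

theorem finrank_range_chainComp_eq_of_sameOrbit {φ ψ : HomSp n V} (h : sameOrbit φ ψ) {i j : ℕ}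
    (hij : i ≤ j) (hj : j ≤ n) :
    finrank ℂ (range (chainComp φ i j)) = finrank ℂ (range (chainComp ψ i j)) := by
  obtain ⟨g, hg⟩ := sameOrbit_iff.mp h
  calc finrank ℂ (range (chainComp φ i j))
      = finrank ℂ ((range (chainComp φ i j)).map (g j).toLinearMap) :=
        (LinearEquiv.finrank_map_eq _ _).symm
    _ = finrank ℂ (range (chainComp ψ i j ∘ₗ (g i).toLinearMap)) := by
        rw [← chainComp_intertwine hg hij hj, range_comp]
    _ = finrank ℂ (range (chainComp ψ i j)) := by rw [LinearEquiv.range_comp]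

def MatchesKerFlags (φ ψ : HomSp n V) (k : ℕ) (g : V k ≃ₗ[ℂ] V k) : Prop :=
  ∀ j, k ≤ j → j ≤ n → ker (chainComp ψ k j ∘ₗ g.toLinearMap) = ker (chainComp φ k j)

theorem exists_comp_eq_matchesKerFlags [∀ i, FiniteDimensional ℂ (V i)] {φ ψ : HomSp n V}
    (hdim : ∀ i j, i ≤ j → j ≤ n →
      finrank ℂ (ker (chainComp φ i j)) = finrank ℂ (ker (chainComp ψ i j)))
    {k : ℕ} (hk : k ≤ n) {U : Type u} [AddCommGroup U] [Module ℂ U] {α β : U →ₗ[ℂ] V k}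
    (hker : ker α = ker β)
    (hcomap : ∀ j, k ≤ j → j ≤ n →
      (ker (chainComp φ k j)).comap α = (ker (chainComp ψ k j)).comap β) :
    ∃ h : V k ≃ₗ[ℂ] V k, h.toLinearMap ∘ₗ α = β ∧ MatchesKerFlags φ ψ k h := by
  obtain ⟨h, hα, hS⟩ := exists_linearEquiv_comp_eq_map_eq (m := n + 1 - k) hker
    (S := fun a => ker (chainComp φ k (k + a))) (S' := fun a => ker (chainComp ψ k (k + a)))
    (fun a b hab => ker_chainComp_mono φ le_self_add (by simpa using hab) (by omega))
    (fun a b hab => ker_chainComp_mono ψ le_self_add (by simpa using hab) (by omega))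
    (fun a => hcomap _ le_self_add (by omega)) (fun a => hdim _ _ le_self_add (by omega))
  refine ⟨h, hα, fun j hkj hj => ?_⟩
  obtain ⟨a, rfl⟩ := Nat.exists_eq_add_of_le hkj
  rw [ker_comp, ← hS ⟨a, by omega⟩, Submodule.comap_map_eq_of_injective h.injective]

theorem exists_intertwiner_lt_matchesKerFlags [∀ i, FiniteDimensional ℂ (V i)] {φ ψ : HomSp n V}
    (hdim : ∀ i j, i ≤ j → j ≤ n →
      finrank ℂ (ker (chainComp φ i j)) = finrank ℂ (ker (chainComp ψ i j)))
    {k : ℕ} (hk : k ≤ n) :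
    ∃ g : ∀ t, V t ≃ₗ[ℂ] V t,
      (∀ i : Fin n, (i : ℕ) < k → (g (i + 1)).toLinearMap ∘ₗ φ i = ψ i ∘ₗ g i) ∧
        MatchesKerFlags φ ψ k (g k) := by
  induction k with
  | zero =>
    obtain ⟨h, -, hh⟩ := exists_comp_eq_matchesKerFlags hdim hk (α := (0 : V 0 →ₗ[ℂ] V 0))
      (β := 0) rfl (fun _ _ _ => by simp only [Submodule.comap_zero])
    refine ⟨Function.update (fun t => LinearEquiv.refl ℂ (V t)) 0 h,
      fun i hi => absurd hi (Nat.not_lt_zero _), by rwa [Function.update_self]⟩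
  | succ k ih =>
    obtain ⟨g, hg, hgk⟩ := ih (by omega)
    have hkn : k < n := by omega
    have hker : ker (φ ⟨k, hkn⟩) = ker (ψ ⟨k, hkn⟩ ∘ₗ (g k).toLinearMap) := by
      rw [← chainComp_self_succ φ hkn, ← chainComp_self_succ ψ hkn, hgk (k + 1) (by omega) hk]
    have hcomap : ∀ j, k + 1 ≤ j → j ≤ n →
        (ker (chainComp φ (k + 1) j)).comap (φ ⟨k, hkn⟩)
          = (ker (chainComp ψ (k + 1) j)).comap (ψ ⟨k, hkn⟩ ∘ₗ (g k).toLinearMap) := by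
      intro j hkj hj
      rw [Submodule.comap_comp, ← ker_chainComp_eq_comap φ hkj hj,
        ← ker_chainComp_eq_comap ψ hkj hj, ← ker_comp, hgk j (by omega) hj]
    obtain ⟨h, hh, hhk⟩ := exists_comp_eq_matchesKerFlags hdim hk hker hcomap
    refine ⟨Function.update g (k + 1) h, fun i hi => ?_, by rwa [Function.update_self]⟩
    rcases Nat.lt_succ_iff_lt_or_eq.mp hi with hi | rfl
    · rw [Function.update_of_ne (by omega), Function.update_of_ne (by omega)]
      exact hg i hi
    · rw [Function.update_self, Function.update_of_ne (by omega)]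
      exact hh

theorem sameOrbit_of_finrank_range_eq [∀ i, FiniteDimensional ℂ (V i)] {φ ψ : HomSp n V}
    (hrank : ∀ i j, i ≤ j → j ≤ n →
      finrank ℂ (range (chainComp φ i j)) = finrank ℂ (range (chainComp ψ i j))) :
    sameOrbit φ ψ := by
  have hdim : ∀ i j, i ≤ j → j ≤ n →
      finrank ℂ (ker (chainComp φ i j)) = finrank ℂ (ker (chainComp ψ i j)) := by
    intro i j hij hj
    have := hrank i j hij hj
    have := finrank_range_add_finrank_ker (chainComp φ i j)
    have := finrank_range_add_finrank_ker (chainComp ψ i j)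
    omega
  obtain ⟨g, hg, -⟩ := exists_intertwiner_lt_matchesKerFlags hdim le_rfl
  exact sameOrbit_iff.mpr ⟨g, fun i => hg i i.isLt⟩

theorem sameOrbit_iff_finrank_range_eq [∀ i, FiniteDimensional ℂ (V i)] {φ ψ : HomSp n V} :
    sameOrbit φ ψ ↔ ∀ i j, i ≤ j → j ≤ n →
      finrank ℂ (range (chainComp φ i j)) = finrank ℂ (range (chainComp ψ i j)) :=
  ⟨fun h _ _ hij hj => finrank_range_chainComp_eq_of_sameOrbit h hij hj,
    sameOrbit_of_finrank_range_eq⟩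

end Quiver

/-- every nonempty open quiver locus `Ω°_r` is a single `GL`-orbit, every
`GL`-orbit is `Ω°_r` for the rank array `r` of composite ranks of any of its elements, and
this rank array is the unique one whose open quiver locus is the given orbit. -/
theorem openLocus_eq_orbit (n : ℕ) (V : ℕ → Type*) [∀ i, AddCommGroup (V i)]
    [∀ i, Module ℂ (V i)] [∀ i, FiniteDimensional ℂ (V i)] :
    (∀ r : ℕ → ℕ → ℕ, (∀ i ≤ n, r i i = Module.finrank ℂ (V i)) →
      ∀ φ : HomSp n V, inOpenLocus r φ → ∀ ψ : HomSp n V, (inOpenLocus r ψ ↔ sameOrbit φ ψ))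
    ∧ (∀ φ : HomSp n V, ∀ ψ : HomSp n V,
        sameOrbit φ ψ ↔
          inOpenLocus (fun i j => Module.finrank ℂ (LinearMap.range (chainComp φ i j))) ψ)
    ∧ (∀ φ : HomSp n V, ∀ r : ℕ → ℕ → ℕ, (∀ i ≤ n, r i i = Module.finrank ℂ (V i)) →
        (∀ ψ : HomSp n V, sameOrbit φ ψ ↔ inOpenLocus r ψ) →
        ∀ i j : ℕ, i ≤ j → j ≤ n →
          r i j = Module.finrank ℂ (LinearMap.range (chainComp φ i j))) := by
  refine ⟨fun r _ φ hφ ψ => ?_, fun φ ψ => ?_, fun φ r _ hr i j hij hj => ?_⟩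
  · rw [sameOrbit_iff_finrank_range_eq]
    exact forall₄_congr fun i j hij hj => by rw [hφ i j hij hj, eq_comm]
  · rw [sameOrbit_iff_finrank_range_eq]
    exact forall₄_congr fun _ _ _ _ => eq_comm
  · exact ((hr φ).mp (sameOrbit_refl φ) i j hij hj).symm
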